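/- arXiv:1612.08070 — 3 statements merged into one kernel-verified Lean document; each statement's English description precedes it below -/
import Mathlib

section
/- For all real p and β with 0 ≤ p ≤ 1 and 0 ≤ β ≤ 1, and every natural number j, setting m = ⌊(1−β)·j·p⌋, one has Σ_{i=0}^{m} C(j,i) p^i (1−p)^{j−i} ≤ exp(−β² j p / 2), where C(j,i) is the binomial coefficient. -/
/-!
Exponential-moment (Chernoff) argument: weighting the `i`-th term of the lower tail by
`e^{β(m - i)} ≥ 1` and completing the sum, the binomial theorem bounds the tail by
`e^{βm} (1 - p + p e^{-β})^j ≤ exp (βm + jp (e^{-β} - 1))`. With `m ≤ (1 - β) j p` and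
`e^{-β} ≤ 1 - β + β²/2` the exponent is at most `-β² j p / 2`.
-/

open Finset Real

-- `(1 + x + x²/2)(1 - x + x²/2) = 1 + x⁴/4 ≥ 1`, so this follows from the lower bound on `exp x`.
theorem Real.exp_neg_le_one_sub_add_sq_div_two {x : ℝ} (hx : 0 ≤ x) :
    exp (-x) ≤ 1 - x + x ^ 2 / 2 := by
  have hexp := quadratic_le_exp_of_nonneg hx
  have hprod : exp (-x) * exp x = 1 := by rw [← exp_add, neg_add_cancel, exp_zero]
  nlinarith [exp_pos (-x), sq_nonneg (x ^ 2)]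

theorem sum_choose_mul_pow_le_add_pow {a b : ℝ} (ha : 0 ≤ a) (hb : 0 ≤ b) (s : Finset ℕ)
    (j : ℕ) : ∑ i ∈ s, (j.choose i : ℝ) * a ^ i * b ^ (j - i) ≤ (a + b) ^ j := by
  calc ∑ i ∈ s, (j.choose i : ℝ) * a ^ i * b ^ (j - i)
      ≤ ∑ i ∈ s ∪ range (j + 1), (j.choose i : ℝ) * a ^ i * b ^ (j - i) :=
        sum_le_sum_of_subset_of_nonneg subset_union_left fun _ _ _ => by positivity
    _ = ∑ i ∈ range (j + 1), (j.choose i : ℝ) * a ^ i * b ^ (j - i) := by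
        refine (sum_subset subset_union_right fun i _ hi => ?_).symm
        rw [Nat.choose_eq_zero_of_lt (by simpa [Nat.lt_succ_iff] using hi)]
        simp
    _ = (a + b) ^ j := by
        rw [add_pow]
        exact sum_congr rfl fun i _ => by ring

theorem binomial_lower_tail_le_exp {p t : ℝ} (hp0 : 0 ≤ p) (hp1 : p ≤ 1) (ht : 0 ≤ t)
    (m j : ℕ) :
    ∑ i ∈ range (m + 1), (j.choose i : ℝ) * p ^ i * (1 - p) ^ (j - i)
      ≤ exp (t * m + j * (p * (exp (-t) - 1))) := by
  have hq : 0 ≤ 1 - p := by linarith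
  have hweight : ∀ i ∈ range (m + 1),
      (j.choose i : ℝ) * p ^ i * (1 - p) ^ (j - i)
        ≤ exp (t * m) * ((j.choose i : ℝ) * (p * exp (-t)) ^ i * (1 - p) ^ (j - i)) := by
    intro i hi
    have him : (i : ℝ) ≤ m := by exact_mod_cast Nat.lt_succ_iff.mp (mem_range.mp hi)
    have hone : 1 ≤ exp (t * m) * exp (-t) ^ i := by
      rw [← exp_nat_mul, ← exp_add]
      exact one_le_exp (by nlinarith)
    calc (j.choose i : ℝ) * p ^ i * (1 - p) ^ (j - i)
        ≤ (exp (t * m) * exp (-t) ^ i) * ((j.choose i : ℝ) * p ^ i * (1 - p) ^ (j - i)) :=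
          le_mul_of_one_le_left (by positivity) hone
      _ = exp (t * m) * ((j.choose i : ℝ) * (p * exp (-t)) ^ i * (1 - p) ^ (j - i)) := by
          ring
  have hmgf : p * exp (-t) + (1 - p) ≤ exp (p * (exp (-t) - 1)) := by
    linarith [add_one_le_exp (p * (exp (-t) - 1))]
  calc ∑ i ∈ range (m + 1), (j.choose i : ℝ) * p ^ i * (1 - p) ^ (j - i)
      ≤ exp (t * m) * ∑ i ∈ range (m + 1),
          (j.choose i : ℝ) * (p * exp (-t)) ^ i * (1 - p) ^ (j - i) := by
        rw [mul_sum]; exact sum_le_sum hweight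
    _ ≤ exp (t * m) * (p * exp (-t) + (1 - p)) ^ j := by
        gcongr
        exact sum_choose_mul_pow_le_add_pow (by positivity) hq _ j
    _ ≤ exp (t * m) * exp (p * (exp (-t) - 1)) ^ j := by gcongr
    _ = exp (t * m + j * (p * (exp (-t) - 1))) := by rw [← exp_nat_mul, exp_add]

/-- Chernoff-bound corollary.  For reals `0 ≤ p ≤ 1`, `0 ≤ β ≤ 1`
and a natural number `j`, with `m = ⌊(1−β)·j·p⌋`,
`Σ_{i=0}^{m} C(j,i) p^i (1−p)^{j−i} ≤ exp(−β² j p / 2)`. -/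
theorem chernoff_lower_tail (p β : ℝ) (hp0 : 0 ≤ p) (hp1 : p ≤ 1)
    (hβ0 : 0 ≤ β) (hβ1 : β ≤ 1) (j : ℕ) :
    ∑ i ∈ Finset.range (⌊(1 - β) * j * p⌋₊ + 1),
        (j.choose i : ℝ) * p ^ i * (1 - p) ^ (j - i)
      ≤ Real.exp (-(β ^ 2 * j * p) / 2) := by
  refine (binomial_lower_tail_le_exp hp0 hp1 hβ0 _ j).trans (exp_le_exp.mpr ?_)
  have hβ1' : 0 ≤ 1 - β := by linarith
  have hfloor : (⌊(1 - β) * j * p⌋₊ : ℝ) ≤ (1 - β) * j * p := Nat.floor_le (by positivity)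
  have hjp : (0 : ℝ) ≤ j * p := by positivity
  nlinarith [mul_le_mul_of_nonneg_left hfloor hβ0,
    mul_le_mul_of_nonneg_left (exp_neg_le_one_sub_add_sq_div_two hβ0) hjp]
end

section
/- Let 0 ≤ ε̃ ≤ 1/2 and let j be a natural number. Then Σ_{i=0}^{⌊j/2⌋} C(j,i) (1−ε̃)^i ε̃^{j−i} ≤ exp( −(j/(2(1−ε̃))) · (1/2 − ε̃)² ), where C(j,i) is the binomial coefficient. (Equivalently: if each of j independent trials succeeds with probability 1−ε̃, the probability that at most ⌊j/2⌋ trials succeed is at most exp(−j(1/2−ε̃)²/(2(1−ε̃))), which bounds the error of majority-vote probability amplification.) -/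
/-!
Since `ε ≤ 1 - ε`, every term with `i ≤ m = ⌊j/2⌋` satisfies
`(1 - ε)^i ε^(j-i) ≤ (1 - ε)^m ε^(j-m)`, and the binomial coefficients add up to at most `2^j`;
so the tail is at most `(2ε)^(j-2m) (4ε(1-ε))^m`. With `δ = 1/2 - ε` the two bases are
`1 - 2δ` and `1 - 4δ²`, which `1 + x ≤ eˣ` bounds by `c` and `c²` for `c = exp(-δ²/(2(1-ε)))`.
-/

open Finset Real

section OrderedSemiring

variable {R : Type*} [CommSemiring R] [PartialOrder R] [IsOrderedRing R]

theorem pow_mul_pow_sub_le_pow_mul_pow_sub {p q : R} (hq : 0 ≤ q) (hqp : q ≤ p)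
    {i m j : ℕ} (him : i ≤ m) (hmj : m ≤ j) :
    p ^ i * q ^ (j - i) ≤ p ^ m * q ^ (j - m) := by
  have hp : 0 ≤ p := hq.trans hqp
  have hsplit : j - i = (m - i) + (j - m) := by omega
  calc p ^ i * q ^ (j - i) = p ^ i * q ^ (m - i) * q ^ (j - m) := by
        rw [hsplit, pow_add, mul_assoc]
    _ ≤ p ^ i * p ^ (m - i) * q ^ (j - m) := by gcongr
    _ = p ^ m * q ^ (j - m) := by rw [← pow_add, Nat.add_sub_cancel' him]

theorem sum_range_choose_mul_pow_mul_pow_le {p q : R} (hq : 0 ≤ q) (hqp : q ≤ p)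
    {m j : ℕ} (hmj : m ≤ j) :
    ∑ i ∈ range (m + 1), (j.choose i : R) * p ^ i * q ^ (j - i)
      ≤ 2 ^ j * p ^ m * q ^ (j - m) := by
  have hp : 0 ≤ p := hq.trans hqp
  have hchoose : ∑ i ∈ range (m + 1), (j.choose i : R) ≤ 2 ^ j := by
    have h := sum_le_sum_of_subset (f := j.choose)
      (range_subset_range.mpr (by omega : m + 1 ≤ j + 1))
    rw [Nat.sum_range_choose] at h
    exact_mod_cast Nat.mono_cast (α := R) h
  calc ∑ i ∈ range (m + 1), (j.choose i : R) * p ^ i * q ^ (j - i)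
      ≤ ∑ i ∈ range (m + 1), (j.choose i : R) * (p ^ m * q ^ (j - m)) := by
        refine sum_le_sum fun i hi => ?_
        rw [mul_assoc]
        exact mul_le_mul_of_nonneg_left
          (pow_mul_pow_sub_le_pow_mul_pow_sub hq hqp (by simpa [Nat.lt_succ_iff] using hi) hmj)
          (Nat.cast_nonneg _)
    _ ≤ 2 ^ j * p ^ m * q ^ (j - m) := by
        rw [← sum_mul, mul_assoc]
        exact mul_le_mul_of_nonneg_right hchoose (mul_nonneg (pow_nonneg hp _) (pow_nonneg hq _))

end OrderedSemiring

theorem two_mul_le_exp_neg_sq_div {eps : ℝ} (h1 : eps ≤ 1 / 2) :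
    2 * eps ≤ exp (-(1 / 2 - eps) ^ 2 / (2 * (1 - eps))) := by
  have hquot : (1 / 2 - eps) ^ 2 / (2 * (1 - eps)) ≤ 2 * (1 / 2 - eps) := by
    rw [div_le_iff₀ (by linarith)]
    nlinarith
  linarith [add_one_le_exp (-(1 / 2 - eps) ^ 2 / (2 * (1 - eps))),
    neg_div (2 * (1 - eps)) ((1 / 2 - eps) ^ 2)]

theorem four_mul_mul_one_sub_le_exp_neg_sq_div_sq {eps : ℝ} (h1 : eps ≤ 1 / 2) :
    4 * eps * (1 - eps) ≤ exp (-(1 / 2 - eps) ^ 2 / (2 * (1 - eps))) ^ 2 := by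
  have hsq : exp (-(1 / 2 - eps) ^ 2 / (2 * (1 - eps))) ^ 2
      = exp (-((1 / 2 - eps) ^ 2 / (1 - eps))) := by
    rw [← exp_nat_mul]
    congr 1
    push_cast
    field_simp
  have hquot : (1 / 2 - eps) ^ 2 / (1 - eps) ≤ 4 * (1 / 2 - eps) ^ 2 := by
    rw [div_le_iff₀ (by linarith)]
    nlinarith [sq_nonneg (1 / 2 - eps)]
  rw [hsq]
  nlinarith [add_one_le_exp (-((1 / 2 - eps) ^ 2 / (1 - eps)))]

/-- majority-vote amplification error.  For `0 ≤ ε̃ ≤ 1/2` and `j : ℕ`,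
`Σ_{i=0}^{⌊j/2⌋} C(j,i) (1−ε̃)^i ε̃^{j−i} ≤ exp(−(j/(2(1−ε̃)))·(1/2 − ε̃)²)`. -/
theorem majority_vote_error (eps : ℝ) (h0 : 0 ≤ eps) (h1 : eps ≤ 1 / 2) (j : ℕ) :
    ∑ i ∈ Finset.range (j / 2 + 1),
        (j.choose i : ℝ) * (1 - eps) ^ i * eps ^ (j - i)
      ≤ Real.exp (-((j : ℝ) / (2 * (1 - eps))) * (1 / 2 - eps) ^ 2) := by
  set c := exp (-(1 / 2 - eps) ^ 2 / (2 * (1 - eps)))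
  have hj : j = j % 2 + 2 * (j / 2) := (Nat.mod_add_div j 2).symm
  generalize j / 2 = m, j % 2 = k at hj ⊢
  subst hj
  have h2eps : 0 ≤ 2 * eps := by linarith
  have h4eps : 0 ≤ 4 * eps * (1 - eps) := mul_nonneg (by linarith) (by linarith)
  calc ∑ i ∈ range (m + 1), ((k + 2 * m).choose i : ℝ) * (1 - eps) ^ i * eps ^ (k + 2 * m - i)
      ≤ 2 ^ (k + 2 * m) * (1 - eps) ^ m * eps ^ (k + 2 * m - m) :=
        sum_range_choose_mul_pow_mul_pow_le h0 (by linarith) (by omega)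
    _ = (2 * eps) ^ k * (4 * eps * (1 - eps)) ^ m := by
        rw [show k + 2 * m - m = k + m by omega]
        simp only [pow_add, pow_mul, mul_pow]
        ring
    _ ≤ c ^ k * (c ^ 2) ^ m := by
        gcongr
        · exact two_mul_le_exp_neg_sq_div h1
        · exact four_mul_mul_one_sub_le_exp_neg_sq_div_sq h1
    _ = exp (-((↑(k + 2 * m) : ℝ) / (2 * (1 - eps))) * (1 / 2 - eps) ^ 2) := by
        rw [← pow_mul, ← pow_add, ← exp_nat_mul]
        congr 1
        ring
end

section
/- Let H be a finite-dimensional complex inner product space, let P̄_0,…,P̄_n be a CSOP on H, let U_0,…,U_t be unitary operators on H, let Ψ ∈ H, and let Q be an orthogonal projection on H. Define π : {0,1}^n → ℝ by π(x) = ‖ Q · Σ_{k ∈ {0,…,n}^{t+1}} (−1)^{s_x(k)} Ψ(k) ‖², where s_x(k) = Σ_{i=0}^t x_{k_i} and x_0 := 0. Then the Fourier 1-norm of π satisfies L(π) ≤ Σ_{k,h ∈ {0,…,n}^{t+1}} |⟨Ψ(k), Q Ψ(h)⟩|. -/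
noncomputable section

/-- `Utilde U j = U j ∘ U (j-1) ∘ ⋯ ∘ U 0`. -/
def Utilde {H : Type*} [NormedAddCommGroup H] [InnerProductSpace ℂ H]
    (U : ℕ → H →L[ℂ] H) : ℕ → H →L[ℂ] H
  | 0 => U 0
  | j + 1 => U (j + 1) ∘L Utilde U j

/-- `Ptilde U P i j = (Utilde U j)† ∘ P i ∘ Utilde U j`. -/
def Ptilde {H : Type*} [NormedAddCommGroup H] [InnerProductSpace ℂ H]
    [FiniteDimensional ℂ H] (U P : ℕ → H →L[ℂ] H) (i j : ℕ) : H →L[ℂ] H :=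
  ContinuousLinearMap.adjoint (Utilde U j) ∘L (P i ∘L Utilde U j)

/-- `PsiVec U P Ψ k t = Ψ(k) = P̃_{k t}^t ⋯ P̃_{k 1}^1 P̃_{k 0}^0 Ψ`. -/
def PsiVec {H : Type*} [NormedAddCommGroup H] [InnerProductSpace ℂ H]
    [FiniteDimensional ℂ H] (U P : ℕ → H →L[ℂ] H) (Ψ : H) (k : ℕ → ℕ) : ℕ → H
  | 0 => Ptilde U P (k 0) 0 Ψ
  | j + 1 => Ptilde U P (k (j + 1)) (j + 1) (PsiVec U P Ψ k j)

/-- Extension of `x ∈ {0,1}^n` (bits `x_1, …, x_n`) to indices `0, …, n` with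
the convention `x_0 := 0`. -/
def extend0 {n : ℕ} (x : Fin n → Bool) : ℕ → Bool :=
  fun m => if h : 1 ≤ m ∧ m ≤ n then x ⟨m - 1, by omega⟩ else false

/-- `sx x k = Σ_{i=0}^t x_{k_i}` (with `x_0 := 0`). -/
def sx {n t : ℕ} (x : Fin n → Bool) (k : Fin (t + 1) → Fin (n + 1)) : ℕ :=
  ∑ i, if extend0 x (k i) then 1 else 0


/-- The character `χ_b(x) = (−1)^{b·x}` on the Boolean cube, where
`b·x = Σ_i b_i x_i`. -/
def chi {n : ℕ} (b x : Fin n → Bool) : ℝ :=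
  (-1 : ℝ) ^ (∑ i, if b i && x i then 1 else 0 : ℕ)

/-- The Fourier coefficient `α_b = 2^{−n} Σ_x f(x) χ_b(x)` of `f : {0,1}^n → ℝ`. -/
def boolFourierCoeff {n : ℕ} (f : (Fin n → Bool) → ℝ) (b : Fin n → Bool) : ℝ :=
  (2 ^ n : ℝ)⁻¹ * ∑ x, f x * chi b x

/-- The Fourier 1-norm `L(f) = Σ_b |α_b|`. -/
def fourierL1 {n : ℕ} (f : (Fin n → Bool) → ℝ) : ℝ :=
  ∑ b, |boolFourierCoeff f b|

/-! Expanding the square, `π(x) = Σ_{k,h} (−1)^{s_x(k) + s_x(h)} Re ⟨Ψ(k), Q Ψ(h)⟩`, and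
`(−1)^{s_x(k)} = χ_{β(k)}(x)` where `β(k)_i` is the parity of the number of occurrences of the
letter `i` in `k` (the letter `0` contributes nothing since `x_0 = 0`). So `π` is a linear
combination of the characters `χ_{β(k) ⊕ β(h)}` with coefficients `Re ⟨Ψ(k), Q Ψ(h)⟩`, and the
Fourier 1-norm, being subadditive with `L(c χ_b) = |c|`, is at most the sum of their absolute
values. -/

open Finset

section BooleanFourier

variable {n : ℕ}

lemma chi_eq_prod (b x : Fin n → Bool) :
    chi b x = ∏ i, (-1 : ℝ) ^ (if b i && x i then 1 else 0 : ℕ) := by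
  rw [chi, prod_pow_eq_pow_sum]

lemma chi_mul_chi (b c x : Fin n → Bool) :
    chi b x * chi c x = chi (fun i => xor (b i) (c i)) x := by
  rw [chi_eq_prod, chi_eq_prod, chi_eq_prod, ← prod_mul_distrib]
  refine prod_congr rfl fun i _ => ?_
  cases b i <;> cases c i <;> cases x i <;> norm_num

lemma sum_chi (c : Fin n → Bool) :
    ∑ x, chi c x = if c = fun _ => false then 2 ^ n else 0 := by
  have hfactor : ∑ x, chi c x = ∏ i, (if c i then 0 else 2 : ℝ) := by
    simp_rw [chi_eq_prod]
    rw [← Fintype.prod_sum fun i a => (-1 : ℝ) ^ (if c i && a then 1 else 0 : ℕ)]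
    refine prod_congr rfl fun i _ => ?_
    cases c i <;> norm_num
  rw [hfactor]
  split_ifs with hc
  · simp [hc]
  · obtain ⟨i, hi⟩ : ∃ i, c i = true := by
      by_contra! h
      exact hc (funext fun i => by simpa using h i)
    exact prod_eq_zero (mem_univ i) (by simp [hi])

lemma sum_chi_mul_chi (b c : Fin n → Bool) :
    ∑ x, chi b x * chi c x = if b = c then 2 ^ n else 0 := by
  simp_rw [chi_mul_chi, sum_chi]
  congr 1
  refine propext ⟨fun h => funext fun i => ?_, fun h => funext fun i => by simp [h]⟩
  simpa using congrFun h i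

lemma boolFourierCoeff_add (f g : (Fin n → Bool) → ℝ) (b : Fin n → Bool) :
    boolFourierCoeff (f + g) b = boolFourierCoeff f b + boolFourierCoeff g b := by
  simp only [boolFourierCoeff, Pi.add_apply, add_mul, sum_add_distrib, mul_add]

lemma boolFourierCoeff_const_mul_chi (c : ℝ) (b b' : Fin n → Bool) :
    boolFourierCoeff (fun x => c * chi b x) b' = if b = b' then c else 0 := by
  simp_rw [boolFourierCoeff, mul_assoc, ← mul_sum, sum_chi_mul_chi]
  split_ifs
  · field_simp
  · rw [mul_zero, mul_zero]

lemma fourierL1_zero : fourierL1 (0 : (Fin n → Bool) → ℝ) = 0 := by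
  simp [fourierL1, boolFourierCoeff]

lemma fourierL1_add_le (f g : (Fin n → Bool) → ℝ) :
    fourierL1 (f + g) ≤ fourierL1 f + fourierL1 g := by
  simp_rw [fourierL1, boolFourierCoeff_add, ← sum_add_distrib]
  exact sum_le_sum fun b _ => abs_add_le _ _

lemma fourierL1_const_mul_chi (c : ℝ) (b : Fin n → Bool) :
    fourierL1 (fun x => c * chi b x) = |c| := by
  simp_rw [fourierL1, boolFourierCoeff_const_mul_chi, apply_ite, abs_zero, sum_ite_eq,
    if_pos (mem_univ b)]

theorem fourierL1_sum_mul_chi_le {ι : Type*} (s : Finset ι) (c : ι → ℝ)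
    (β : ι → Fin n → Bool) :
    fourierL1 (fun x => ∑ j ∈ s, c j * chi (β j) x) ≤ ∑ j ∈ s, |c j| := by
  have h := le_sum_of_subadditive fourierL1 fourierL1_zero.le fourierL1_add_le s
    fun j x => c j * chi (β j) x
  simpa only [sum_fn, fourierL1_const_mul_chi] using h

end BooleanFourier

section Signs

variable {n t : ℕ}

def occurrenceParity (k : Fin (t + 1) → Fin (n + 1)) (i : Fin n) : Bool :=
  decide (Odd #{j | k j = i.succ})

lemma extend0_zero (x : Fin n → Bool) : extend0 x 0 = false := by
  simp [extend0]

lemma extend0_succ (x : Fin n → Bool) (i : Fin n) : extend0 x (i + 1) = x i := by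
  simp [extend0, Nat.succ_le_of_lt i.isLt]

lemma neg_one_pow_sx (x : Fin n → Bool) (k : Fin (t + 1) → Fin (n + 1)) :
    (-1 : ℝ) ^ sx x k = chi (occurrenceParity k) x := by
  let sign : Fin (n + 1) → ℝ := fun a => (-1) ^ (if extend0 x a then 1 else 0 : ℕ)
  calc (-1 : ℝ) ^ sx x k = ∏ j, sign (k j) := by rw [sx, prod_pow_eq_pow_sum]
    _ = ∏ a, sign a ^ #{j | k j = a} := by
      rw [← prod_fiberwise' univ k sign]
      exact prod_congr rfl fun a _ => prod_const _
    _ = ∏ i : Fin n, sign i.succ ^ #{j | k j = i.succ} := by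
      simp [Fin.prod_univ_succ, sign, extend0_zero]
    _ = chi (occurrenceParity k) x := by
      rw [chi_eq_prod]
      refine prod_congr rfl fun i _ => ?_
      simp only [sign, Fin.val_succ, extend0_succ, occurrenceParity]
      cases x i
      · simp
      · rcases Nat.even_or_odd #{j | k j = i.succ} with he | ho
        · simp [he.neg_one_pow, Nat.not_odd_iff_even.mpr he]
        · simp [ho.neg_one_pow, ho]

end Signs

section Projection

variable {E : Type*} [NormedAddCommGroup E] [InnerProductSpace ℂ E] [CompleteSpace E]

lemma norm_apply_sq_eq_re_inner_of_isProjection {Q : E →L[ℂ] E} (hQ : IsSelfAdjoint Q)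
    (hQQ : Q ∘L Q = Q) (v : E) : ‖Q v‖ ^ 2 = (inner ℂ v (Q v)).re := by
  have hQv : inner ℂ (Q v) (Q v) = inner ℂ v (Q v) := by
    simpa [← ContinuousLinearMap.comp_apply, hQQ] using hQ.isSymmetric v (Q v)
  rw [← inner_self_eq_norm_sq (𝕜 := ℂ), hQv, RCLike.re_to_complex]

lemma norm_apply_sum_smul_sq {ι : Type*} [Fintype ι] {Q : E →L[ℂ] E} (hQ : IsSelfAdjoint Q)
    (hQQ : Q ∘L Q = Q) (ε : ι → ℝ) (Φ : ι → E) :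
    ‖Q (∑ k, (ε k : ℂ) • Φ k)‖ ^ 2 = ∑ k, ∑ h, ε k * ε h * (inner ℂ (Φ k) (Q (Φ h))).re := by
  rw [norm_apply_sq_eq_re_inner_of_isProjection hQ hQQ]
  simp only [map_sum, map_smul, sum_inner, inner_sum, inner_smul_left, inner_smul_right,
    Complex.conj_ofReal, Complex.re_sum, Complex.re_ofReal_mul, mul_assoc, mul_sum]
  rw [Finset.sum_comm]
  exact sum_congr rfl fun _ _ => sum_congr rfl fun _ _ => mul_left_comm _ _ _

end Projection

theorem fourierL1_norm_proj_signed_sum_le {E : Type*} [NormedAddCommGroup E]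
    [InnerProductSpace ℂ E] [CompleteSpace E] (n t : ℕ)
    (Φ : (Fin (t + 1) → Fin (n + 1)) → E) {Q : E →L[ℂ] E} (hQ : IsSelfAdjoint Q)
    (hQQ : Q ∘L Q = Q) :
    fourierL1 (fun x : Fin n → Bool =>
        ‖Q (∑ k : Fin (t + 1) → Fin (n + 1), ((-1 : ℂ) ^ sx x k) • Φ k)‖ ^ 2) ≤
      ∑ k, ∑ h, ‖(inner ℂ (Φ k) (Q (Φ h)) : ℂ)‖ := by
  have hπ : ∀ x : Fin n → Bool,
      ‖Q (∑ k : Fin (t + 1) → Fin (n + 1), ((-1 : ℂ) ^ sx x k) • Φ k)‖ ^ 2 =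
        ∑ k, ∑ h, (inner ℂ (Φ k) (Q (Φ h))).re *
          chi (fun i => xor (occurrenceParity k i) (occurrenceParity h i)) x := by
    intro x
    have hsign : ∀ k : Fin (t + 1) → Fin (n + 1),
        (-1 : ℂ) ^ sx x k = ((chi (occurrenceParity k) x : ℝ) : ℂ) := by
      intro k
      rw [← neg_one_pow_sx]
      push_cast
      rfl
    simp_rw [hsign, norm_apply_sum_smul_sq hQ hQQ, ← chi_mul_chi, mul_comm]
  simp_rw [hπ, ← Fintype.sum_prod_type']
  exact (fourierL1_sum_mul_chi_le _ _ _).trans (sum_le_sum fun _ _ => Complex.abs_re_le_norm _)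

theorem fourierL1_le_inner_sum_general {H : Type*} [NormedAddCommGroup H]
    [InnerProductSpace ℂ H] [FiniteDimensional ℂ H] (n t : ℕ) (P U : ℕ → H →L[ℂ] H)
    (Ψ : H) (Q : H →L[ℂ] H) (hQ_selfadj : IsSelfAdjoint Q) (hQ_idem : Q ∘L Q = Q) :
    fourierL1 (fun x : Fin n → Bool =>
        ‖Q (∑ k : Fin (t + 1) → Fin (n + 1),
            ((-1 : ℂ) ^ sx x k) • PsiVec U P Ψ (fun i => (k (Fin.ofNat (t + 1) i) : ℕ)) t)‖ ^ 2) ≤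
      ∑ k : Fin (t + 1) → Fin (n + 1), ∑ h : Fin (t + 1) → Fin (n + 1),
        ‖(inner ℂ (PsiVec U P Ψ (fun i => (k (Fin.ofNat (t + 1) i) : ℕ)) t)
                (Q (PsiVec U P Ψ (fun i => (h (Fin.ofNat (t + 1) i) : ℕ)) t)) : ℂ)‖ :=
  fourierL1_norm_proj_signed_sum_le n t _ hQ_selfadj hQ_idem

/-- For a CSOP `P̄_0, …, P̄_n`, unitaries `U_0, …, U_t`, `Ψ ∈ H` and an
orthogonal projection `Q`, the output probability
`π(x) = ‖Q Σ_k (−1)^{s_x(k)} Ψ(k)‖²` satisfies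
`L(π) ≤ Σ_{k,h} |⟨Ψ(k), Q Ψ(h)⟩|`. -/
theorem fourierL1_le_inner_sum {H : Type*} [NormedAddCommGroup H]
    [InnerProductSpace ℂ H] [FiniteDimensional ℂ H] (n t : ℕ) (P U : ℕ → H →L[ℂ] H)
    (hP_selfadj : ∀ i ≤ n, IsSelfAdjoint (P i))
    (hP_idem : ∀ i ≤ n, P i ∘L P i = P i)
    (hP_orth : ∀ i ≤ n, ∀ j ≤ n, i ≠ j → P i ∘L P j = 0)
    (hP_sum : ∑ i ∈ Finset.range (n + 1), P i = 1)
    (hU_unitary : ∀ j ≤ t,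
      ContinuousLinearMap.adjoint (U j) ∘L U j = 1 ∧
        U j ∘L ContinuousLinearMap.adjoint (U j) = 1)
    (Ψ : H) (Q : H →L[ℂ] H) (hQ_selfadj : IsSelfAdjoint Q) (hQ_idem : Q ∘L Q = Q) :
    fourierL1 (fun x : Fin n → Bool =>
        ‖Q (∑ k : Fin (t + 1) → Fin (n + 1),
            ((-1 : ℂ) ^ sx x k) • PsiVec U P Ψ (fun i => (k (Fin.ofNat (t + 1) i) : ℕ)) t)‖ ^ 2) ≤
      ∑ k : Fin (t + 1) → Fin (n + 1), ∑ h : Fin (t + 1) → Fin (n + 1),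
        ‖(inner ℂ (PsiVec U P Ψ (fun i => (k (Fin.ofNat (t + 1) i) : ℕ)) t)
                (Q (PsiVec U P Ψ (fun i => (h (Fin.ofNat (t + 1) i) : ℕ)) t)) : ℂ)‖ :=
  fourierL1_le_inner_sum_general n t P U Ψ Q hQ_selfadj hQ_idem
end
end
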